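/- Let β > 0, L > 0, T > 0. Suppose B : ℝ → ℝ is differentiable along a trajectory, B(0) ≤ (L/β)e^{-βT}, and B'(t) ≤ β B(t) whenever B(t) ≥ (L/β)e^{-βT}, while B'(t) ≤ β B(t) + C for some C ≤ 0 whenever B(t) < (L/β)e^{-βT}. If additionally B'(t) ≤ max(β B(t), β (L/β)e^{-βT}) for all t ∈ [0,T], then B(t) < L/β for all t ∈ [0, T). -/

import Mathlib

/-!
Both regimes give `B' ≤ β B` (below the threshold because `C ≤ 0`), so Grönwall yields
`B t ≤ B 0 · e^{βt} ≤ (L/β) e^{β(t - T)}`, which is `< L/β` for `t < T`.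
-/

open Real Set

theorem le_mul_exp_of_deriv_le_mul {f : ℝ → ℝ} {k : ℝ} (hf : Differentiable ℝ f)
    (hf' : ∀ t, deriv f t ≤ k * f t) {a t : ℝ} (hat : a ≤ t) :
    f t ≤ f a * exp (k * (t - a)) := by
  have hbound := le_gronwallBound_of_liminf_deriv_right_le (f' := deriv f) (ε := 0)
    hf.continuous.continuousOn
    (fun x _ _ hr => (hf x).hasDerivAt.hasDerivWithinAt.liminf_right_slope_le hr)
    le_rfl (fun x _ => by simpa using hf' x) t ⟨hat, le_rfl⟩
  rwa [gronwallBound_ε0] at hbound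

theorem stmt_2_general (β L T C : ℝ) (hβ : 0 < β) (hL : 0 < L) (hC : C ≤ 0)
    (B : ℝ → ℝ) (hdiff : Differentiable ℝ B)
    (hB0 : B 0 ≤ (L / β) * Real.exp (-β * T))
    (habove : ∀ t : ℝ, (L / β) * Real.exp (-β * T) ≤ B t → deriv B t ≤ β * B t)
    (hbelow : ∀ t : ℝ, B t < (L / β) * Real.exp (-β * T) → deriv B t ≤ β * B t + C) :
    ∀ t ∈ Set.Ico (0:ℝ) T, B t < L / β := by
  have hgrowth : ∀ t, deriv B t ≤ β * B t := fun t =>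
    (le_or_gt _ (B t)).elim (habove t) fun h => (hbelow t h).trans (by linarith)
  rintro t ⟨ht0, htT⟩
  calc B t ≤ B 0 * exp (β * t) := by
        simpa using le_mul_exp_of_deriv_le_mul hdiff hgrowth ht0
    _ ≤ (L / β) * exp (-β * T) * exp (β * t) := by gcongr
    _ = (L / β) * exp (β * (t - T)) := by rw [mul_assoc, ← exp_add]; ring_nf
    _ < L / β := mul_lt_of_lt_one_right (div_pos hL hβ)
        (exp_lt_one_iff.mpr (mul_neg_of_pos_of_neg hβ (sub_neg.mpr htT)))

/-- Self-contained version of the limited-duration safety theorem. -/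
theorem stmt_2 (β L T C : ℝ) (hβ : 0 < β) (hL : 0 < L) (hT : 0 < T) (hC : C ≤ 0)
    (B : ℝ → ℝ) (hdiff : Differentiable ℝ B)
    (hB0 : B 0 ≤ (L / β) * Real.exp (-β * T))
    (habove : ∀ t : ℝ, (L / β) * Real.exp (-β * T) ≤ B t → deriv B t ≤ β * B t)
    (hbelow : ∀ t : ℝ, B t < (L / β) * Real.exp (-β * T) → deriv B t ≤ β * B t + C)
    (hmax : ∀ t ∈ Set.Icc (0:ℝ) T,
      deriv B t ≤ max (β * B t) (β * ((L / β) * Real.exp (-β * T)))) :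
    ∀ t ∈ Set.Ico (0:ℝ) T, B t < L / β :=
  stmt_2_general β L T C hβ hL hC B hdiff hB0 habove hbelow
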